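/- Let A₁,…,Aₙ, B₁,…,Bₙ be bounded linear operators on a complex Hilbert space H. Then the spectral radius of ∑ᵢ AᵢBᵢ satisfies ρ(∑ᵢ₌₁ⁿ AᵢBᵢ) ≤ max over 1 ≤ i ≤ n of [ w(BᵢAᵢ) + (1/2)·∑_{j≠i} (‖BᵢAⱼ‖ + ‖BⱼAᵢ‖) ]. -/

import Mathlib

open Complex

variable {H : Type*} [NormedAddCommGroup H] [InnerProductSpace ℂ H] [CompleteSpace H]

/-- The numerical radius `w(T) = sup {|⟨Tx,x⟩| : ‖x‖ = 1}`. -/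
noncomputable def numRadius (T : H →L[ℂ] H) : ℝ :=
  sSup {r : ℝ | ∃ x : H, ‖x‖ = 1 ∧ r = ‖(inner ℂ (T x) x : ℂ)‖}

/-- The Crawford number `m(T) = inf {|⟨Tx,x⟩| : ‖x‖ = 1}`. -/
noncomputable def crawford (T : H →L[ℂ] H) : ℝ :=
  sInf {r : ℝ | ∃ x : H, ‖x‖ = 1 ∧ r = ‖(inner ℂ (T x) x : ℂ)‖}

/-- The real part `Re(T) = (T + T*)/2`. -/
noncomputable def reOp (T : H →L[ℂ] H) : H →L[ℂ] H := (2 : ℂ)⁻¹ • (T + star T)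

/-- The imaginary part `Im(T) = (T - T*)/(2i)`. -/
noncomputable def imOp (T : H →L[ℂ] H) : H →L[ℂ] H := (2 * Complex.I)⁻¹ • (T - star T)

/-!
Write `∑ᵢ AᵢBᵢ = 𝔸𝔹` with the row operator `𝔸 = (A₁ ⋯ Aₙ) : Hⁿ → H` and the column operator
`𝔹 = (B₁, …, Bₙ)ᵀ : H → Hⁿ`. Since `𝔸𝔹` and `𝔹𝔸` have the same nonzero spectrum,
`ρ(∑ᵢ AᵢBᵢ) = ρ(𝔹𝔸) ≤ w(𝔹𝔸)`, and `𝔹𝔸` is the operator matrix `(BᵢAⱼ)` on `Hⁿ`.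
For a unit vector `x = (xᵢ)`, bound the diagonal terms of `⟨𝔹𝔸x, x⟩` by `w(BᵢAᵢ)‖xᵢ‖²` and the
off-diagonal ones by `‖BᵢAⱼ‖‖xᵢ‖‖xⱼ‖ ≤ ‖BᵢAⱼ‖(‖xᵢ‖² + ‖xⱼ‖²)/2`; regrouping by `‖xᵢ‖²` gives a
convex combination of the quantities in the maximum.
-/

open Finset

section NumericalRadius

variable {E : Type*} [NormedAddCommGroup E] [InnerProductSpace ℂ E]

theorem numRadius_nonneg (T : E →L[ℂ] E) : 0 ≤ numRadius T :=
  Real.sSup_nonneg fun _ ⟨_, _, hr⟩ => hr ▸ norm_nonneg _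

theorem norm_inner_le_numRadius (T : E →L[ℂ] E) {x : E} (hx : ‖x‖ = 1) :
    ‖(inner ℂ (T x) x : ℂ)‖ ≤ numRadius T := by
  refine le_csSup ⟨‖T‖, ?_⟩ ⟨x, hx, rfl⟩
  rintro _ ⟨y, hy, rfl⟩
  simpa [hy] using (norm_inner_le_norm (T y) y).trans
    (mul_le_mul_of_nonneg_right (T.le_opNorm y) (norm_nonneg y))

theorem numRadius_le {T : E →L[ℂ] E} {M : ℝ} (hM : 0 ≤ M)
    (h : ∀ x, ‖x‖ = 1 → ‖(inner ℂ (T x) x : ℂ)‖ ≤ M) : numRadius T ≤ M :=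
  Real.sSup_le (fun _ ⟨x, hx, hr⟩ => hr ▸ h x hx) hM

theorem norm_inner_le_numRadius_mul_sq (T : E →L[ℂ] E) (x : E) :
    ‖(inner ℂ (T x) x : ℂ)‖ ≤ numRadius T * ‖x‖ ^ 2 := by
  rcases eq_or_ne x 0 with rfl | hx
  · simp
  have hu := norm_inner_le_numRadius T (norm_smul_inv_norm (𝕜 := ℂ) hx)
  rw [map_smul, inner_smul_left, inner_smul_right, ← mul_assoc, norm_mul, norm_mul,
    RCLike.norm_conj, norm_inv, RCLike.norm_ofReal, abs_norm, ← sq] at hu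
  rwa [inv_pow, inv_mul_le_iff₀ (by positivity), mul_comm] at hu

theorem mul_sq_le_norm_inner_algebraMap_sub (T : E →L[ℂ] E) (k : ℂ) (x : E) :
    ‖x‖ ^ 2 * (‖k‖ - numRadius T) ≤
      ‖(inner ℂ ((algebraMap ℂ (E →L[ℂ] E) k - T) x) x : ℂ)‖ := by
  have hkx : ‖(inner ℂ (k • x) x : ℂ)‖ = ‖k‖ * ‖x‖ ^ 2 := by
    rw [inner_smul_left, inner_self_eq_norm_sq_to_K, norm_mul, RCLike.norm_conj, norm_pow,
      RCLike.norm_ofReal, abs_norm]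
  calc ‖x‖ ^ 2 * (‖k‖ - numRadius T)
      = ‖(inner ℂ (k • x) x : ℂ)‖ - numRadius T * ‖x‖ ^ 2 := by rw [hkx]; ring
    _ ≤ ‖(inner ℂ (k • x) x : ℂ)‖ - ‖(inner ℂ (T x) x : ℂ)‖ := by
      gcongr; exact norm_inner_le_numRadius_mul_sq T x
    _ ≤ ‖(inner ℂ ((algebraMap ℂ (E →L[ℂ] E) k - T) x) x : ℂ)‖ := by
      rw [sub_apply, inner_sub_left, Algebra.algebraMap_eq_smul_one]
      exact norm_sub_norm_le _ _

theorem spectralRadius_le_numRadius [CompleteSpace E] (T : E →L[ℂ] E) :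
    spectralRadius ℂ T ≤ ENNReal.ofReal (numRadius T) := by
  refine iSup₂_le fun k hk => ?_
  rw [← enorm_eq_nnnorm, ← ofReal_norm]
  refine ENNReal.ofReal_le_ofReal (not_lt.mp fun hlt => spectrum.mem_iff.mp hk ?_)
  exact ContinuousLinearMap.isUnit_of_forall_le_norm_inner_map _
    (c := ⟨_, (sub_pos.mpr hlt).le⟩) (sub_pos.mpr hlt)
    (mul_sq_le_norm_inner_algebraMap_sub T k)

end NumericalRadius

section SpectrumComp

variable {𝕜 E F : Type*} [NormedField 𝕜] [NormedAddCommGroup E] [NormedSpace 𝕜 E]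
  [NormedAddCommGroup F] [NormedSpace 𝕜 F]

/-- If `D` inverts `k - QP`, then `k⁻¹ (1 + PDQ)` inverts `k - PQ`. -/
theorem isUnit_algebraMap_sub_comp_swap {P : F →L[𝕜] E} {Q : E →L[𝕜] F} {k : 𝕜} (hk : k ≠ 0)
    (h : IsUnit (algebraMap 𝕜 (F →L[𝕜] F) k - Q ∘L P)) :
    IsUnit (algebraMap 𝕜 (E →L[𝕜] E) k - P ∘L Q) := by
  obtain ⟨u, hu⟩ := h
  set D : F →L[𝕜] F := ↑u⁻¹
  have hright : ∀ y, k • D y - Q (P (D y)) = y := fun y => by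
    simpa [hu, Algebra.algebraMap_eq_smul_one] using congr($(u.mul_inv) y)
  have hleft : ∀ y, k • D y - D (Q (P y)) = y := fun y => by
    simpa [hu, Algebra.algebraMap_eq_smul_one] using congr($(u.inv_mul) y)
  refine isUnit_iff_exists.mpr ⟨k⁻¹ • (1 + P ∘L D ∘L Q), ?_, ?_⟩ <;> ext x
  · have e : Q (P (D (Q x))) = k • D (Q x) - Q x :=
      (sub_sub_self _ _).symm.trans (congrArg _ (hright (Q x)))
    simp only [Algebra.algebraMap_eq_smul_one, smul_add, mul_apply_eq_comp, add_apply, smul_apply,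
      one_apply_eq_self, ContinuousLinearMap.comp_apply, sub_apply, map_add, map_smul, e, map_sub]
    match_scalars <;> simp [hk]
  · have e : D (Q (P (Q x))) = k • D (Q x) - Q x :=
      (sub_sub_self _ _).symm.trans (congrArg _ (hleft (Q x)))
    simp only [Algebra.algebraMap_eq_smul_one, smul_add, mul_apply_eq_comp, add_apply, smul_apply,
      one_apply_eq_self, ContinuousLinearMap.comp_apply, sub_apply, map_smul, e, map_sub]
    match_scalars <;> simp [hk]

theorem mem_spectrum_comp_swap {P : F →L[𝕜] E} {Q : E →L[𝕜] F} {k : 𝕜} (hk : k ≠ 0)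
    (h : k ∈ spectrum 𝕜 (P ∘L Q)) : k ∈ spectrum 𝕜 (Q ∘L P) :=
  fun hQP => h (isUnit_algebraMap_sub_comp_swap hk hQP)

theorem spectralRadius_comp_le (P : F →L[𝕜] E) (Q : E →L[𝕜] F) :
    spectralRadius 𝕜 (P ∘L Q) ≤ spectralRadius 𝕜 (Q ∘L P) := by
  refine iSup₂_le fun k hk => ?_
  rcases eq_or_ne k 0 with rfl | hk0
  · simp
  · exact le_iSup₂_of_le k (mem_spectrum_comp_swap hk0 hk) le_rfl

theorem spectralRadius_comp_comm (P : F →L[𝕜] E) (Q : E →L[𝕜] F) :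
    spectralRadius 𝕜 (P ∘L Q) = spectralRadius 𝕜 (Q ∘L P) :=
  (spectralRadius_comp_le P Q).antisymm (spectralRadius_comp_le Q P)

end SpectrumComp

theorem sum_sum_erase_comm {ι M : Type*} [Fintype ι] [DecidableEq ι] [AddCommMonoid M]
    (f : ι → ι → M) :
    ∑ i, ∑ j ∈ univ.erase i, f i j = ∑ i, ∑ j ∈ univ.erase i, f j i :=
  sum_comm' fun i j => by simp only [mem_univ, mem_erase, true_and, and_true, ne_comm]

theorem sum_sum_erase_mul_mul_le {ι : Type*} [Fintype ι] [DecidableEq ι] {c : ι → ι → ℝ}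
    (hc : ∀ i j, 0 ≤ c i j) (t : ι → ℝ) :
    ∑ i, ∑ j ∈ univ.erase i, c i j * (t i * t j) ≤
      ∑ i, (1 / 2) * (∑ j ∈ univ.erase i, (c i j + c j i)) * t i ^ 2 :=
  calc ∑ i, ∑ j ∈ univ.erase i, c i j * (t i * t j)
      ≤ ∑ i, ∑ j ∈ univ.erase i, (c i j * t i ^ 2 / 2 + c i j * t j ^ 2 / 2) := by
        gcongr with i _ j _
        nlinarith [mul_nonneg (hc i j) (sq_nonneg (t i - t j))]
    _ = ∑ i, ∑ j ∈ univ.erase i, (c i j * t i ^ 2 / 2 + c j i * t i ^ 2 / 2) := by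
        simp only [sum_add_distrib]
        rw [sum_sum_erase_comm fun i j => c i j * t j ^ 2 / 2]
    _ = ∑ i, (1 / 2) * (∑ j ∈ univ.erase i, (c i j + c j i)) * t i ^ 2 :=
        sum_congr rfl fun i _ => by
          rw [mul_sum, sum_mul]; exact sum_congr rfl fun j _ => by ring

section RowColumn

variable {𝕜 ι E F : Type*} [NormedField 𝕜] [NormedAddCommGroup E] [NormedSpace 𝕜 E]
  [NormedAddCommGroup F] [NormedSpace 𝕜 F]

noncomputable def colOp (B : ι → E →L[𝕜] F) : E →L[𝕜] PiLp 2 (fun _ : ι => F) :=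
  (PiLp.continuousLinearEquiv 2 𝕜 fun _ : ι => F).symm.toContinuousLinearMap ∘L
    ContinuousLinearMap.pi B

@[simp]
theorem colOp_apply (B : ι → E →L[𝕜] F) (y : E) (i : ι) : colOp B y i = B i y := rfl

variable [Fintype ι]

noncomputable def rowOp (A : ι → F →L[𝕜] E) : PiLp 2 (fun _ : ι => F) →L[𝕜] E :=
  ∑ j, A j ∘L PiLp.proj 2 (fun _ : ι => F) j

@[simp]
theorem rowOp_apply (A : ι → F →L[𝕜] E) (x : PiLp 2 fun _ : ι => F) :
    rowOp A x = ∑ j, A j (x j) := by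
  simp [rowOp]

theorem rowOp_comp_colOp (A B : ι → E →L[𝕜] E) : rowOp A ∘L colOp B = ∑ i, A i * B i := by
  ext y; simp

theorem colOp_comp_rowOp_apply (A B : ι → E →L[𝕜] E) (x : PiLp 2 fun _ : ι => E) (i : ι) :
    (colOp B ∘L rowOp A) x i = ∑ j, (B i * A j) (x j) := by
  simp

end RowColumn

section OperatorMatrix

variable {ι E : Type*} [Fintype ι] [DecidableEq ι] [NormedAddCommGroup E] [InnerProductSpace ℂ E]

theorem norm_inner_le_of_entries (S : PiLp 2 (fun _ : ι => E) →L[ℂ] PiLp 2 (fun _ : ι => E))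
    (T : ι → ι → E →L[ℂ] E) (hS : ∀ x i, S x i = ∑ j, T i j (x j)) (x : PiLp 2 fun _ : ι => E) :
    ‖(inner ℂ (S x) x : ℂ)‖ ≤
      ∑ i, (numRadius (T i i) + (1 / 2) * ∑ j ∈ univ.erase i, (‖T i j‖ + ‖T j i‖)) * ‖x i‖ ^ 2 :=
  calc ‖(inner ℂ (S x) x : ℂ)‖
      = ‖∑ i, ∑ j, (inner ℂ (T i j (x j)) (x i) : ℂ)‖ := by
        simp only [PiLp.inner_apply, hS, sum_inner]
    _ ≤ ∑ i, ∑ j, ‖(inner ℂ (T i j (x j)) (x i) : ℂ)‖ :=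
        (norm_sum_le _ _).trans (sum_le_sum fun i _ => norm_sum_le _ _)
    _ = ∑ i, (‖(inner ℂ (T i i (x i)) (x i) : ℂ)‖ +
          ∑ j ∈ univ.erase i, ‖(inner ℂ (T i j (x j)) (x i) : ℂ)‖) :=
        sum_congr rfl fun i _ => (add_sum_erase _ _ (mem_univ i)).symm
    _ ≤ ∑ i, (numRadius (T i i) * ‖x i‖ ^ 2 +
          ∑ j ∈ univ.erase i, ‖T i j‖ * (‖x i‖ * ‖x j‖)) := by
        gcongr with i _ j _
        · exact norm_inner_le_numRadius_mul_sq _ _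
        · calc ‖(inner ℂ (T i j (x j)) (x i) : ℂ)‖ ≤ ‖T i j (x j)‖ * ‖x i‖ := norm_inner_le_norm _ _
            _ ≤ ‖T i j‖ * ‖x j‖ * ‖x i‖ := by gcongr; exact (T i j).le_opNorm _
            _ = ‖T i j‖ * (‖x i‖ * ‖x j‖) := by ring
    _ ≤ ∑ i, numRadius (T i i) * ‖x i‖ ^ 2 +
          ∑ i, (1 / 2) * (∑ j ∈ univ.erase i, (‖T i j‖ + ‖T j i‖)) * ‖x i‖ ^ 2 := by
        rw [sum_add_distrib]
        exact add_le_add le_rfl (sum_sum_erase_mul_mul_le (fun _ _ => norm_nonneg _) _)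
    _ = _ := by
        rw [← sum_add_distrib]
        exact sum_congr rfl fun i _ => by ring

theorem numRadius_le_sup'_of_entries [Nonempty ι]
    (S : PiLp 2 (fun _ : ι => E) →L[ℂ] PiLp 2 (fun _ : ι => E))
    (T : ι → ι → E →L[ℂ] E) (hS : ∀ x i, S x i = ∑ j, T i j (x j)) :
    numRadius S ≤ univ.sup' univ_nonempty
      fun i => numRadius (T i i) + (1 / 2) * ∑ j ∈ univ.erase i, (‖T i j‖ + ‖T j i‖) := by
  set m := fun i => numRadius (T i i) + (1 / 2) * ∑ j ∈ univ.erase i, (‖T i j‖ + ‖T j i‖)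
  obtain ⟨i₀⟩ := ‹Nonempty ι›
  have hm0 : 0 ≤ m i₀ := add_nonneg (numRadius_nonneg _) (by positivity)
  refine numRadius_le (hm0.trans (le_sup' m (mem_univ i₀))) fun x hx =>
    (norm_inner_le_of_entries S T hS x).trans ?_
  calc ∑ i, m i * ‖x i‖ ^ 2 ≤ ∑ i, univ.sup' univ_nonempty m * ‖x i‖ ^ 2 := by
        gcongr with i; exact le_sup' m (mem_univ i)
    _ = univ.sup' univ_nonempty m := by
        rw [← mul_sum, ← PiLp.norm_sq_eq_of_L2, hx, one_pow, mul_one]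

end OperatorMatrix

theorem stmt7 (n : ℕ) (hn : 0 < n) (A B : Fin n → (H →L[ℂ] H)) :
    spectralRadius ℂ (∑ i, A i * B i) ≤
      ENNReal.ofReal
        (Finset.univ.sup' (Finset.univ_nonempty_iff.mpr (Fin.pos_iff_nonempty.mp hn))
          fun i => numRadius (B i * A i)
            + (1/2) * ∑ j ∈ Finset.univ.erase i, (‖B i * A j‖ + ‖B j * A i‖)) := by
  have : Nonempty (Fin n) := Fin.pos_iff_nonempty.mp hn
  rw [← rowOp_comp_colOp, spectralRadius_comp_comm]
  exact (spectralRadius_le_numRadius _).trans <| ENNReal.ofReal_le_ofReal <|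
    numRadius_le_sup'_of_entries _ (fun i j => B i * A j) (colOp_comp_rowOp_apply A B)
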